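/- For any finite non-solvable group G, the solvable graph Γ_s(G) is not complete bipartite, i.e., there is no partition of the vertex set G \ Sol(G) into two nonempty parts A₁, A₂ such that two distinct vertices are adjacent in Γ_s(G) if and only if they lie in different parts. -/

import Mathlib

/-- The solvabilizer of `u` in `G`: the set of `v` such that `⟨u, v⟩` is solvable. -/
def solvabilizer (G : Type*) [Group G] (u : G) : Set G :=
  {v | IsSolvable (Subgroup.closure {u, v})}

/-- The solvable radical `Sol(G)`: elements `u` with `⟨u, v⟩` solvable for all `v`. -/
def solRadical (G : Type*) [Group G] : Set G :=
  {u | ∀ v : G, IsSolvable (Subgroup.closure {u, v})}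

/-- The solvable graph of `G`: vertex set `G \ Sol(G)`, two distinct vertices `u`, `v`
adjacent iff `⟨u, v⟩` is solvable. -/
def solvableGraph (G : Type*) [Group G] : SimpleGraph {u : G // u ∉ solRadical G} where
  Adj u v := u ≠ v ∧ IsSolvable (Subgroup.closure {(u : G), (v : G)})
  symm := by
    constructor
    rintro u v ⟨hne, hs⟩
    exact ⟨hne.symm, by rwa [Set.pair_comm]⟩
  loopless := by constructor; rintro u ⟨hne, _⟩; exact hne rfl

/-!
Suppose the solvable graph is complete bipartite and let `x` be a vertex, with `⟨x, y⟩`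
non-solvable. Since `⟨x⁻¹, y⟩ = ⟨x, y⟩`, both `x` and `x⁻¹` lie in the part of `y`; but
`⟨x, x⁻¹⟩` is cyclic, so `x = x⁻¹`. Applying this to `x`, `y` and `xy` (note
`⟨x, xy⟩ = ⟨x, y⟩`) shows that all three are involutions, so `x` and `y` commute and
`⟨x, y⟩` is abelian after all.
-/

open Subgroup

section SolvablePairs

variable {G : Type*} [Group G]

theorem closure_pair_inv_left (x y : G) : closure {x⁻¹, y} = closure {x, y} := by
  rw [Set.insert_eq, Set.insert_eq, Subgroup.closure_union, Subgroup.closure_union,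
    closure_singleton_inv]

theorem closure_pair_mul_right (x y : G) : closure {x, x * y} = closure {x, y} := by
  apply le_antisymm <;> rw [closure_le, Set.insert_subset_iff, Set.singleton_subset_iff]
  · exact ⟨subset_closure (by simp), mul_mem (subset_closure (by simp)) (subset_closure (by simp))⟩
  · refine ⟨subset_closure (by simp), ?_⟩
    simpa using mul_mem (inv_mem (subset_closure (by simp : x ∈ ({x, x * y} : Set G))))
      (subset_closure (by simp : x * y ∈ ({x, x * y} : Set G)))

theorem isSolvable_closure_pair_of_commute {x y : G} (h : Commute x y) :
    IsSolvable (closure {x, y}) := by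
  refine Group.isSolvable_of_comm (isMulCommutative_closure ?_).is_comm.comm
  rintro a (rfl | rfl) b (rfl | rfl) <;> first | rfl | exact h | exact h.symm

theorem notMem_solRadical_left {x y : G} (h : ¬IsSolvable (closure {x, y})) :
    x ∉ solRadical G :=
  fun hx => h (hx y)

theorem notMem_solRadical_right {x y : G} (h : ¬IsSolvable (closure {x, y})) :
    y ∉ solRadical G :=
  notMem_solRadical_left (Set.pair_comm x y ▸ h)

theorem ne_of_not_isSolvable_closure_pair {x y : G} (h : ¬IsSolvable (closure {x, y})) :
    x ≠ y := by
  rintro rfl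
  exact h (isSolvable_closure_pair_of_commute (Commute.refl x))

theorem exists_not_isSolvable_closure_pair {x : G} (hx : x ∉ solRadical G) :
    ∃ y, ¬IsSolvable (closure {x, y}) := by
  simpa [solRadical] using hx

end SolvablePairs

section Bipartition

variable {G : Type*} [Group G]

/-- The solvable graph is complete bipartite with parts `side` and `¬ side`. -/
def IsSolvableGraphBipartition (side : G → Prop) : Prop :=
  ∀ x y : G, x ∉ solRadical G → y ∉ solRadical G → x ≠ y →
    (IsSolvable (closure {x, y}) ↔ ¬(side x ↔ side y))

namespace IsSolvableGraphBipartition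

variable {side : G → Prop} (hside : IsSolvableGraphBipartition side)
include hside

theorem side_iff {x y : G} (h : ¬IsSolvable (closure {x, y})) : side x ↔ side y := by
  by_contra hxy
  exact h <| (hside x y (notMem_solRadical_left h) (notMem_solRadical_right h)
    (ne_of_not_isSolvable_closure_pair h)).2 hxy

theorem inv_eq_self {x y : G} (h : ¬IsSolvable (closure {x, y})) : x⁻¹ = x := by
  have h' : ¬IsSolvable (closure {x⁻¹, y}) := by rwa [closure_pair_inv_left]
  by_contra hne
  have hsame : side x⁻¹ ↔ side x := (hside.side_iff h').trans (hside.side_iff h).symm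
  exact (hside x⁻¹ x (notMem_solRadical_left h') (notMem_solRadical_left h) hne).1
    (isSolvable_closure_pair_of_commute (Commute.refl x).inv_left) hsame

theorem mem_solRadical (x : G) : x ∈ solRadical G := by
  by_contra hx
  obtain ⟨y, hxy⟩ := exists_not_isSolvable_closure_pair hx
  have hx' := hside.inv_eq_self hxy
  have hy' := hside.inv_eq_self (Set.pair_comm x y ▸ hxy)
  have hxy' := hside.inv_eq_self
    (Set.pair_comm x (x * y) ▸ (closure_pair_mul_right x y).symm ▸ hxy)
  refine hxy (isSolvable_closure_pair_of_commute ?_)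
  calc x * y = (x * y)⁻¹ := hxy'.symm
    _ = y * x := by rw [mul_inv_rev, hx', hy']

end IsSolvableGraphBipartition

end Bipartition

theorem solvableGraph_not_completeBipartite {G : Type*} [Group G] :
    ¬ ∃ A₁ A₂ : Set {x : G // x ∉ solRadical G},
        A₁.Nonempty ∧ A₂.Nonempty ∧ A₁ ∪ A₂ = Set.univ ∧ A₁ ∩ A₂ = ∅ ∧
        ∀ v w : {x : G // x ∉ solRadical G}, v ≠ w →
          ((solvableGraph G).Adj v w ↔ ((v ∈ A₁ ∧ w ∈ A₂) ∨ (v ∈ A₂ ∧ w ∈ A₁))) := by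
  rintro ⟨A₁, A₂, ⟨u, -⟩, -, huniv, hdisj, hbip⟩
  obtain rfl : A₂ = A₁ᶜ :=
    (IsCompl.compl_eq ⟨Set.disjoint_iff_inter_eq_empty.2 hdisj,
      codisjoint_iff.2 huniv⟩).symm
  have hside : IsSolvableGraphBipartition fun x : G => ∃ hx, ⟨x, hx⟩ ∈ A₁ := by
    intro x y hx hy hne
    have hadj := hbip ⟨x, hx⟩ ⟨y, hy⟩ (by simpa using hne)
    simp only [solvableGraph, hne, hx, hy, ne_eq, Subtype.mk.injEq, not_false_eq_true, true_and,
      exists_true_left, Set.mem_compl_iff] at hadj ⊢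
    rw [hadj]
    tauto
  exact u.2 (hside.mem_solRadical u)
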